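/- Let n ≥ 1 and let e : [0,1]^n → ℝ be continuously differentiable and vanish on Γ_D (i.e., e(x) = 0 whenever some coordinate x_p = 0). Then ∫_{Γ_N} e² dΓ ≤ ∫_Ω |∇e(x)|² dx, where ∫_{Γ_N} e² dΓ = Σ_{p=1}^n ∫_{[0,1]^{n−1}} e(x)²|_{x_p=1} dx′ (integration over the remaining n−1 coordinates on each face x_p = 1). -/

import Mathlib

open MeasureTheory Real Matrix

noncomputable section

/-- The closed unit hypercube `[0,1]^n`. -/
def cube (n : ℕ) : Set (Fin n → ℝ) := Set.univ.pi fun _ => Set.Icc (0:ℝ) 1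

/-- Partial derivative of `u` in the `p`-th coordinate direction. -/
def pd {n : ℕ} (p : Fin n) (u : (Fin n → ℝ) → ℝ) (x : Fin n → ℝ) : ℝ :=
  fderiv ℝ u x (Pi.single p 1)

/-- Squared Euclidean norm of the gradient, `|∇u|²`. -/
def gradSq {n : ℕ} (u : (Fin n → ℝ) → ℝ) (x : Fin n → ℝ) : ℝ := ∑ p, (pd p u x) ^ 2

/-- Laplacian `Δu = Σ_p u_{x_p x_p}`. -/
def lap {n : ℕ} (u : (Fin n → ℝ) → ℝ) (x : Fin n → ℝ) : ℝ := ∑ p, pd p (pd p u) x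

/-- Surface integral over `Γ_N`: `Σ_p ∫_{[0,1]^{n-1}} h|_{x_p = 1} dx'`
(each face integral realized as an integral over the cube of a function
independent of the `p`-th coordinate). -/
def faceInt {n : ℕ} (h : (Fin n → ℝ) → ℝ) : ℝ :=
  ∑ p : Fin n, ∫ x in cube n, h (Function.update x p 1)

/-- `xᵀ∇u`. -/
def xGrad {n : ℕ} (u : (Fin n → ℝ) → ℝ) (x : Fin n → ℝ) : ℝ := ∑ p, x p * pd p u x

/-- Minimal eigenvalue of a symmetric matrix, via the Rayleigh quotient. -/
def lamMin (M : Matrix (Fin 3) (Fin 3) ℝ) : ℝ :=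
  sInf {r | ∃ v : Fin 3 → ℝ, (∑ i, (v i) ^ 2) = 1 ∧ r = v ⬝ᵥ M.mulVec v}

/-- Maximal eigenvalue of a symmetric matrix, via the Rayleigh quotient. -/
def lamMax (M : Matrix (Fin 3) (Fin 3) ℝ) : ℝ :=
  sSup {r | ∃ v : Fin 3 → ℝ, (∑ i, (v i) ^ 2) = 1 ∧ r = v ⬝ᵥ M.mulVec v}

/-- Negative definiteness. -/
def NegDefM {m : ℕ} (M : Matrix (Fin m) (Fin m) ℝ) : Prop := (-M).PosDef

/-- Negative semidefiniteness. -/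
def NegSemidefM {m : ℕ} (M : Matrix (Fin m) (Fin m) ℝ) : Prop := (-M).PosSemidef

/-- The matrix `Φ₀` of LMI (12). -/
def Phi0 (n : ℕ) (χ lam0 : ℝ) : Matrix (Fin 3) (Fin 3) ℝ :=
  !![1/2 - 4*lam0/(π^2*n), Real.sqrt n * χ, 0;
     Real.sqrt n * χ, 1/2, ((n:ℝ)-1)*χ/2;
     0, ((n:ℝ)-1)*χ/2, lam0]

/-- `Φ₁ = Φ₀ + diag(4λ₀/(π²n), 0, 0)`. -/
def Phi1 (n : ℕ) (χ lam0 : ℝ) : Matrix (Fin 3) (Fin 3) ℝ :=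
  Phi0 n χ lam0 + Matrix.diagonal ![4*lam0/(π^2*n), 0, 0]

/-- The matrix `Ψ₂` of LMI (14). -/
def Psi2 (n : ℕ) (k χ δ g1 lam1 : ℝ) : Matrix (Fin 3) (Fin 3) ℝ :=
  !![-χ + δ*(1 + χ*k*((n:ℝ)-1)) + 4*lam1/(π^2*n), 2*δ*Real.sqrt n*χ, Real.sqrt n*g1*χ;
     2*δ*Real.sqrt n*χ, -χ + δ, g1/2 + δ*((n:ℝ)-1)*χ;
     Real.sqrt n*g1*χ, g1/2 + δ*((n:ℝ)-1)*χ, -lam1 + g1*((n:ℝ)-1)*χ]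

/-- The matrix `Φ` of the exact-observability LMI (32), with `σ = e^{-2δT*}`. -/
def PhiM (n : ℕ) (χ σ lam2 : ℝ) : Matrix (Fin 3) (Fin 3) ℝ :=
  !![-(1-σ)/2 + 4*lam2/(π^2*n), Real.sqrt n*(1+σ)*χ, 0;
     Real.sqrt n*(1+σ)*χ, -(1-σ)/2, ((n:ℝ)-1)*(1+σ)*χ/2;
     0, ((n:ℝ)-1)*(1+σ)*χ/2, -lam2]

/-- `α = 2λ_min(Φ₀)`. -/
def alphaC (n : ℕ) (χ lam0 : ℝ) : ℝ := 2 * lamMin (Phi0 n χ lam0)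

/-- `β = 2(1 + 4/(π²n))λ_max(Φ₁) + χk(n−1)`. -/
def betaC (n : ℕ) (k χ lam0 : ℝ) : ℝ :=
  2 * (1 + 4/(π^2*n)) * lamMax (Phi1 n χ lam0) + χ*k*((n:ℝ)-1)


section AuxTraceSobolev

open MeasureTheory

/-- `insertNth` specialized to real-valued tuples (fixes elaboration). -/
def insC {m : ℕ} (p : Fin (m+1)) (t : ℝ) (y : Fin m → ℝ) : Fin (m+1) → ℝ :=
  p.insertNth t y

lemma insC_update {m : ℕ} (p : Fin (m+1)) (s t : ℝ) (y : Fin m → ℝ) :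
    Function.update (insC p s y) p t = insC p t y :=
  Fin.update_insertNth (α := fun _ => ℝ) p s t y

lemma insC_apply_same {m : ℕ} (p : Fin (m+1)) (t : ℝ) (y : Fin m → ℝ) :
    insC p t y p = t :=
  Fin.insertNth_apply_same (α := fun _ => ℝ) p t y

lemma insC_apply_succAbove {m : ℕ} (p : Fin (m+1)) (t : ℝ) (y : Fin m → ℝ) (j : Fin m) :
    insC p t y (p.succAbove j) = y j :=
  Fin.insertNth_apply_succAbove (α := fun _ => ℝ) p t y j

lemma insC_mem_cube {m : ℕ} {p : Fin (m+1)} {t : ℝ} {y : Fin m → ℝ}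
    (ht : t ∈ Set.Icc (0:ℝ) 1) (hy : y ∈ cube m) : insC p t y ∈ cube (m+1) := by
  simp only [cube, Set.mem_pi, Set.mem_univ, forall_true_left] at hy ⊢
  intro i
  rcases eq_or_ne i p with rfl | hne
  · rw [insC_apply_same]; exact ht
  · obtain ⟨j, rfl⟩ := Fin.exists_succAbove_eq hne
    rw [insC_apply_succAbove]; exact hy j

/-- Cauchy–Schwarz on `[0,1]`: `(∫ h)² ≤ ∫ h²`. -/
lemma aux_sq_integral_le {h : ℝ → ℝ} (hc : Continuous h) :
    (∫ t in Set.Icc (0:ℝ) 1, h t) ^ 2 ≤ ∫ t in Set.Icc (0:ℝ) 1, (h t) ^ 2 := by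
  set μ := volume.restrict (Set.Icc (0:ℝ) 1) with hμdef
  have hμ : μ Set.univ = 1 := by
    simp [hμdef, Real.volume_Icc]
  have hint : Integrable h μ := hc.integrableOn_Icc
  have hint2 : Integrable (fun t => (h t) ^ 2) μ := (hc.pow 2).integrableOn_Icc
  set I := ∫ t, h t ∂μ with hI
  have key : 0 ≤ ∫ t, (h t - I) ^ 2 ∂μ := integral_nonneg fun t => sq_nonneg _
  have expand : ∫ t, (h t - I) ^ 2 ∂μ = (∫ t, (h t) ^ 2 ∂μ) - I ^ 2 := by
    have heq : (fun t => (h t - I) ^ 2) = fun t => ((h t) ^ 2 - 2 * I * h t) + I ^ 2 := by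
      funext t; ring
    have hsub : Integrable (fun t => h t ^ 2 - 2 * I * h t) μ := by
      exact hint2.sub (hint.const_mul _)
    have hcm : Integrable (fun t => 2 * I * h t) μ := hint.const_mul _
    rw [heq, integral_add hsub (integrable_const _),
      integral_sub hint2 hcm, integral_const_mul, integral_const]
    simp only [measureReal_def, hμ, ENNReal.toReal_one, smul_eq_mul, one_mul, ← hI]
    ring
  linarith

/-- FTC + Cauchy–Schwarz along one coordinate line. -/
lemma aux_ftc {m : ℕ} (p : Fin (m+1)) (e : (Fin (m+1) → ℝ) → ℝ)
    (he : ContDiff ℝ 1 e) (y : Fin m → ℝ)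
    (h0 : e (insC p 0 y) = 0) :
    (e (insC p 1 y)) ^ 2 ≤ ∫ t in Set.Icc (0:ℝ) 1, (pd p e (insC p t y)) ^ 2 := by
  have hcrep : (fun t : ℝ => insC p t y)
      = fun t : ℝ => insC p 0 y + t • (Pi.single p 1 : Fin (m+1) → ℝ) := by
    funext t
    funext i
    rw [← insC_update p 0 t y]
    rcases eq_or_ne i p with rfl | hne
    · simp [insC_apply_same]
    · simp [Function.update_of_ne hne, Pi.single_eq_of_ne hne]
  have hcd : ∀ t : ℝ, HasDerivAt (fun s : ℝ => insC p s y)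
      (Pi.single p 1 : Fin (m+1) → ℝ) t := by
    intro t
    rw [hcrep]
    simpa using (((hasDerivAt_id t).smul_const
      (Pi.single p 1 : Fin (m+1) → ℝ)).const_add (insC p 0 y))
  have hccont : Continuous fun t : ℝ => insC p t y := by
    rw [hcrep]; exact continuous_const.add (continuous_id.smul continuous_const)
  have hg : ∀ t : ℝ, HasDerivAt (fun s : ℝ => e (insC p s y))
      (pd p e (insC p t y)) t := fun t =>
    ((he.differentiable one_ne_zero (insC p t y)).hasFDerivAt).comp_hasDerivAt t (hcd t)
  have hdc : Continuous fun t : ℝ => pd p e (insC p t y) :=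
    Continuous.clm_apply ((he.continuous_fderiv one_ne_zero).comp hccont) continuous_const
  have hftc : ∫ t in (0:ℝ)..1, pd p e (insC p t y)
      = e (insC p 1 y) - e (insC p 0 y) :=
    intervalIntegral.integral_eq_sub_of_hasDerivAt (fun t _ => hg t)
      (hdc.intervalIntegrable 0 1)
  have h1 : ∫ t in Set.Icc (0:ℝ) 1, pd p e (insC p t y) = e (insC p 1 y) := by
    rw [integral_Icc_eq_integral_Ioc, ← intervalIntegral.integral_of_le zero_le_one, hftc, h0,
      sub_zero]
  calc (e (insC p 1 y)) ^ 2
      = (∫ t in Set.Icc (0:ℝ) 1, pd p e (insC p t y)) ^ 2 := by rw [h1]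
    _ ≤ ∫ t in Set.Icc (0:ℝ) 1, (pd p e (insC p t y)) ^ 2 := aux_sq_integral_le hdc

/-- Per-face inequality: `∫_{cube} e(x with x_p = 1)² ≤ ∫_{cube} (∂_p e)²`. -/
lemma aux_face {m : ℕ} (p : Fin (m+1)) (e : (Fin (m+1) → ℝ) → ℝ)
    (he : ContDiff ℝ 1 e)
    (hD : ∀ x ∈ cube (m+1), (∃ q, x q = 0) → e x = 0) :
    (∫ x in cube (m+1), (e (Function.update x p 1)) ^ 2)
      ≤ ∫ x in cube (m+1), (pd p e x) ^ 2 := by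
  have hecont : Continuous e := he.continuous
  have hpd : Continuous (pd p e) :=
    Continuous.clm_apply (he.continuous_fderiv one_ne_zero) continuous_const
  have hins : Continuous fun z : ℝ × (Fin m → ℝ) => insC p z.1 z.2 := by
    refine continuous_pi fun i => ?_
    rcases eq_or_ne i p with rfl | hne
    · simpa only [insC_apply_same] using
        (continuous_fst : Continuous fun z : ℝ × (Fin m → ℝ) => z.1)
    · obtain ⟨j, rfl⟩ := Fin.exists_succAbove_eq hne
      simpa only [insC_apply_succAbove, Function.comp_def] using
        ((continuous_apply j).comp
          (continuous_snd : Continuous fun z : ℝ × (Fin m → ℝ) => z.2))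
  have hψ : MeasurePreserving (MeasurableEquiv.piFinSuccAbove (fun _ : Fin (m+1) => ℝ) p)
      volume volume :=
    volume_preserving_piFinSuccAbove (fun _ : Fin (m+1) => ℝ) p
  have hcube_meas : MeasurableSet (cube (m+1)) :=
    MeasurableSet.univ_pi fun _ => measurableSet_Icc
  have hcubem_meas : MeasurableSet (cube m) :=
    MeasurableSet.univ_pi fun _ => measurableSet_Icc
  have hpre : (MeasurableEquiv.piFinSuccAbove (fun _ : Fin (m+1) => ℝ) p) ⁻¹'
      (Set.Icc (0:ℝ) 1 ×ˢ cube m) = cube (m+1) := by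
    ext x
    simp only [Set.mem_preimage, MeasurableEquiv.piFinSuccAbove_apply, Set.mem_prod,
      Fin.insertNthEquiv_symm_apply, cube, Set.mem_pi, Set.mem_univ, forall_true_left]
    rw [Fin.forall_iff_succAbove p]
    rfl
  have hScompact : IsCompact (Set.Icc (0:ℝ) 1 ×ˢ cube m) :=
    isCompact_Icc.prod (isCompact_univ_pi fun _ => isCompact_Icc)
  have hcubemcompact : IsCompact (cube m) := isCompact_univ_pi fun _ => isCompact_Icc
  -- continuous functions are integrable for the product of restricted measures
  have hIntOn : ∀ G : ℝ × (Fin m → ℝ) → ℝ, Continuous G →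
      Integrable G ((volume.restrict (Set.Icc (0:ℝ) 1)).prod (volume.restrict (cube m))) := by
    intro G hG
    rw [Measure.prod_restrict, ← Measure.volume_eq_prod]
    exact hG.continuousOn.integrableOn_compact hScompact
  -- transfer integrals over the cube to the product space
  have htrans : ∀ F : (Fin (m+1) → ℝ) → ℝ,
      ∫ x in cube (m+1), F x
        = ∫ z, F (insC p z.1 z.2)
          ∂((volume.restrict (Set.Icc (0:ℝ) 1)).prod (volume.restrict (cube m))) := by
    intro F
    have h1 := hψ.setIntegral_preimage_emb
      (MeasurableEquiv.measurableEmbedding _)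
      (fun z : ℝ × (Fin m → ℝ) => F (insC p z.1 z.2)) (Set.Icc (0:ℝ) 1 ×ˢ cube m)
    rw [hpre] at h1
    rw [Measure.prod_restrict, ← Measure.volume_eq_prod, ← h1]
    refine setIntegral_congr_fun hcube_meas fun x _ => ?_
    simp only [insC, MeasurableEquiv.piFinSuccAbove_apply, Fin.insertNthEquiv_symm_apply,
      Fin.insertNth_self_removeNth]
  have hins1 : Continuous fun y : Fin m → ℝ => insC p (1:ℝ) y :=
    hins.comp (continuous_const.prodMk continuous_id)
  -- left-hand side
  have hL : (∫ x in cube (m+1), (e (Function.update x p 1)) ^ 2)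
      = ∫ y in cube m, (e (insC p 1 y)) ^ 2 := by
    rw [htrans (fun x => (e (Function.update x p 1)) ^ 2)]
    simp only [insC_update]
    have hGc : Continuous fun z : ℝ × (Fin m → ℝ) => (e (insC p 1 z.2)) ^ 2 := by
      exact (hecont.comp (hins1.comp continuous_snd)).pow 2
    rw [integral_prod _ (hIntOn _ hGc)]
    simp [MeasureTheory.setIntegral_const, Real.volume_Icc]
  -- right-hand side
  have hR : (∫ x in cube (m+1), (pd p e x) ^ 2)
      = ∫ y in cube m, ∫ t in Set.Icc (0:ℝ) 1, (pd p e (insC p t y)) ^ 2 := by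
    rw [htrans (fun x => (pd p e x) ^ 2)]
    have hGc : Continuous fun z : ℝ × (Fin m → ℝ) => (pd p e (insC p z.1 z.2)) ^ 2 := by
      exact (hpd.comp hins).pow 2
    exact integral_prod_symm _ (hIntOn _ hGc)
  rw [hL, hR]
  refine integral_mono_ae ?_ ?_ ?_
  · have hGc : Continuous fun y : Fin m → ℝ => (e (insC p 1 y)) ^ 2 := by
      exact (hecont.comp hins1).pow 2
    exact hGc.continuousOn.integrableOn_compact hcubemcompact
  · have hGc : Continuous fun z : ℝ × (Fin m → ℝ) => (pd p e (insC p z.1 z.2)) ^ 2 := by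
      exact (hpd.comp hins).pow 2
    exact (hIntOn _ hGc).integral_prod_right
  · refine (ae_restrict_iff' hcubem_meas).2 (Filter.Eventually.of_forall fun y hy => ?_)
    exact aux_ftc p e he y
      (hD _ (insC_mem_cube (Set.left_mem_Icc.2 zero_le_one) hy) ⟨p, insC_apply_same p 0 y⟩)

end AuxTraceSobolev

/-- **n-D trace-type Sobolev inequality (Lemma 1(ii)).** If `e : [0,1]^n → ℝ` is
continuously differentiable and vanishes on `Γ_D`, then
`∫_{Γ_N} e² dΓ ≤ ∫_Ω |∇e|² dx`, where the surface integral over `Γ_N` is the sum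
over `p` of the integrals of `e²` over the faces `{x_p = 1}`. -/
theorem trace_sobolev_nd (n : ℕ) (hn : 1 ≤ n) (e : (Fin n → ℝ) → ℝ)
    (he : ContDiff ℝ 1 e)
    (hD : ∀ x ∈ cube n, (∃ p, x p = 0) → e x = 0) :
    faceInt (fun x => (e x) ^ 2) ≤ ∫ x in cube n, gradSq e x := by
  obtain ⟨m, rfl⟩ : ∃ m, n = m + 1 := ⟨n - 1, (Nat.succ_pred_eq_of_pos hn).symm⟩
  have hcubecompact : IsCompact (cube (m+1)) := isCompact_univ_pi fun _ => isCompact_Icc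
  have hgrad : ∫ x in cube (m+1), gradSq e x
      = ∑ p : Fin (m+1), ∫ x in cube (m+1), (pd p e x) ^ 2 := by
    simp only [gradSq]
    refine MeasureTheory.integral_finset_sum Finset.univ fun p _ => ?_
    exact ((Continuous.clm_apply (he.continuous_fderiv one_ne_zero) continuous_const).pow
      2).continuousOn.integrableOn_compact hcubecompact
  rw [hgrad]
  simp only [faceInt]
  exact Finset.sum_le_sum fun p _ => aux_face p e he hD
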